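/- For imaginary octonions u and v, the norm of the cross product satisfies |u × v|² = |u|²|v|² − ⟨u,v⟩². -/

import Mathlib

/-!
Put `w = conj v · u`. Then `u × v = Im w`, and `Re w = ⟨u, v⟩` because the real part of a product
does not depend on the order of the factors, so `|u × v|² = |w|² - ⟨u, v⟩²`. The Cayley–Dickson
doubling of the quaternions is a composition algebra, i.e. `|x · y|² = |x|² |y|²`, which gives
`|w|² = |v|² |u|²`.
-/

noncomputable section

/-- The octonions as Cayley–Dickson pairs of quaternions. -/
abbrev Octonion := Quaternion ℝ × Quaternion ℝ

/-- Cayley–Dickson multiplication. -/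
def omul (x y : Octonion) : Octonion :=
  (x.1 * y.1 - star y.2 * x.2, y.2 * x.1 + x.2 * star y.1)

/-- Octonion conjugation. -/
def oconj (x : Octonion) : Octonion := (star x.1, -x.2)

/-- Real part, identified with a real number. -/
def oRe (x : Octonion) : ℝ := x.1.re

/-- Imaginary part `(x - conj x)/2`. -/
def oIm (x : Octonion) : Octonion := (2 : ℝ)⁻¹ • (x - oconj x)

/-- The inner product `⟨x,y⟩ = Re (x · conj y)`. -/
def oInner (x y : Octonion) : ℝ := oRe (omul x (oconj y))

/-- The cross product `u × v = Im (conj v · u)` of imaginary octonions. -/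
def ocross (u v : Octonion) : Octonion := oIm (omul (oconj v) u)

/-- The associator `[x,y,z] = ((x·y)·z - x·(y·z))/2`. -/
def oAssoc (x y z : Octonion) : Octonion :=
  (2 : ℝ)⁻¹ • (omul (omul x y) z - omul x (omul y z))

open Quaternion

theorem Quaternion.re_mul_comm {R : Type*} [CommRing R] (a b : ℍ[R]) : (a * b).re = (b * a).re := by
  simp only [re_mul]
  ring

theorem Quaternion.normSq_sub {R : Type*} [CommRing R] (a b : ℍ[R]) :
    normSq (a - b) = normSq a + normSq b - 2 * (a * star b).re := by
  rw [sub_eq_add_neg, normSq_add, normSq_neg, star_neg, mul_neg, re_neg]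
  ring

theorem Quaternion.normSq_eq_re_sq_add_normSq_im {R : Type*} [CommRing R] (a : ℍ[R]) :
    normSq a = a.re ^ 2 + normSq a.im := by
  simp only [normSq_def', re_im, imI_im, imJ_im, imK_im]
  ring

theorem oInner_self (x : Octonion) : oInner x x = normSq x.1 + normSq x.2 := by
  simp only [oInner, oRe, omul, oconj, star_neg, star_star, neg_mul, sub_neg_eq_add, re_add,
    ← normSq_def, star_mul_self, re_coe]

theorem oInner_oconj_self (x : Octonion) : oInner (oconj x) (oconj x) = oInner x x := by
  simp only [oInner_self, oconj, normSq_star, normSq_neg]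

theorem oInner_omul_self (x y : Octonion) :
    oInner (omul x y) (omul x y) = oInner x x * oInner y y := by
  obtain ⟨a, b⟩ := x
  obtain ⟨c, d⟩ := y
  simp only [oInner_self, omul, normSq_sub, normSq_add, map_mul, normSq_star, star_mul, star_star]
  -- the two cross terms agree by cyclicity of the real part
  have cross : (a * c * (star b * d)).re = (d * a * (c * star b)).re := by
    simp only [mul_assoc]
    rw [re_mul_comm d]
    simp only [mul_assoc]
  rw [cross]
  ring

theorem oRe_omul_comm (x y : Octonion) : oRe (omul x y) = oRe (omul y x) := by
  simp only [oRe, omul, re_sub]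
  rw [re_mul_comm x.1, ← re_star (star y.2 * x.2), star_mul, star_star]

theorem oIm_eq (x : Octonion) : oIm x = (x.1.im, x.2) := by
  ext <;> simp [oIm, oconj] <;> ring

theorem oInner_self_eq_oRe_sq_add (x : Octonion) :
    oInner x x = oRe x ^ 2 + oInner (oIm x) (oIm x) := by
  rw [oInner_self, oInner_self, oIm_eq, normSq_eq_re_sq_add_normSq_im, oRe]
  ring

theorem ocross_norm_sq_general (u v : Octonion) :
    oInner (ocross u v) (ocross u v) = oInner u u * oInner v v - (oInner u v) ^ 2 := by
  have hRe : oRe (omul (oconj v) u) = oInner u v := oRe_omul_comm _ _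
  calc oInner (ocross u v) (ocross u v)
      = oInner (omul (oconj v) u) (omul (oconj v) u) - oRe (omul (oconj v) u) ^ 2 := by
        rw [oInner_self_eq_oRe_sq_add (omul (oconj v) u), ocross]
        ring
    _ = oInner u u * oInner v v - oInner u v ^ 2 := by
        rw [oInner_omul_self, oInner_oconj_self, hRe, mul_comm]

theorem ocross_norm_sq (u v : Octonion) (hu : oconj u = -u) (hv : oconj v = -v) :
    oInner (ocross u v) (ocross u v) = oInner u u * oInner v v - (oInner u v) ^ 2 :=
  ocross_norm_sq_general u v
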